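/- For every n ≥ 1 there exists a unique group homomorphism Dₙ from the symmetric group Sₙ into the group of unitary operators on L²(ℝⁿ, ℂ) such that Dₙ(τᵢ) is the operator (Dₙ(τᵢ)ψ)(θ₁,…,θₙ) = S₂(θ_{i+1}−θᵢ)·ψ(θ₁,…,θ_{i−1},θ_{i+1},θᵢ,θ_{i+2},…,θₙ) for each transposition τᵢ = (i, i+1), 1 ≤ i ≤ n−1. In particular each Dₙ(τᵢ) is unitary and satisfies Dₙ(τᵢ)² = 1, Dₙ(τᵢ)Dₙ(τⱼ) = Dₙ(τⱼ)Dₙ(τᵢ) for |i−j| > 1, and the braid relation Dₙ(τᵢ)Dₙ(τᵢ₊₁)Dₙ(τᵢ) = Dₙ(τᵢ₊₁)Dₙ(τᵢ)Dₙ(τᵢ₊₁) for 1 ≤ i ≤ n−2. -/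

import Mathlib

open MeasureTheory Complex

noncomputable section

/-- The `n`-fold L² space over rapidity variables. -/
abbrev Hsp (n : ℕ) : Type := Lp ℂ 2 (volume : Measure (Fin n → ℝ))

/-- The transposition τᵢ = (i, i+1) (0-based) in the symmetric group Sₙ. -/
def tau (n i : ℕ) (h : i + 1 < n) : Equiv.Perm (Fin n) :=
  Equiv.swap ⟨i, Nat.lt_of_succ_lt h⟩ ⟨i + 1, h⟩

/-- `D` is the S₂-twisted representation of Sₙ on L²(ℝⁿ) determined on the
transpositions τᵢ by `(D(τᵢ)ψ)(θ) = S₂(θ_{i+1} − θ_i)·ψ(θ ∘ τᵢ)`. -/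
def IsZamoRep (S₂ : ℝ → ℂ) (n : ℕ)
    (D : Equiv.Perm (Fin n) →* unitary (Hsp n →L[ℂ] Hsp n)) : Prop :=
  ∀ (i : ℕ) (hi : i + 1 < n) (ψ : Hsp n),
    ∀ᵐ θ ∂(volume : Measure (Fin n → ℝ)),
      ((D (tau n i hi) : Hsp n →L[ℂ] Hsp n) ψ) θ
        = S₂ (θ ⟨i + 1, hi⟩ - θ ⟨i, Nat.lt_of_succ_lt hi⟩)
            * ψ (fun m => θ (tau n i hi m))

/-!
The representation is written down explicitly: `D(σ)ψ = c_σ · (ψ ∘ σ)`, where the scattering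
cocycle `c_σ(θ)` is the product of `S₂(θ_{σ p} - θ_{σ q})` over the inversions `p < q`,
`σ q < σ p` of `σ`. The unitarity relation `S₂(t) S₂(-t) = 1` gives the cocycle identity
`c_{στ}(θ) = c_σ(θ) c_τ(θ ∘ σ)`, so `σ ↦ D(σ)` is a representation by isometries, hence by
unitaries, and for an adjacent transposition the only inversion is the swapped pair, which gives the
prescribed action of `τᵢ`. Uniqueness holds because the `τᵢ` generate `Sₙ`, and the three
relations already hold among the `τᵢ` in `Sₙ`.
-/

open Equiv Finset
open scoped ENNReal

section Cocycle

variable {ι : Type*} [Fintype ι] [LinearOrder ι]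

variable (ι) in
def ltPairs : Finset (ι × ι) :=
  univ.filter fun p => p.1 < p.2

lemma prod_ltPairs_perm {M : Type*} [CommMonoid M] (G : ι → ι → M) (τ : Perm ι) :
    ∏ p ∈ ltPairs ι, G (min (τ p.1) (τ p.2)) (max (τ p.1) (τ p.2))
      = ∏ p ∈ ltPairs ι, G p.1 p.2 := by
  have mem : ∀ (τ : Perm ι) p, p ∈ ltPairs ι →
      (min (τ p.1) (τ p.2), max (τ p.1) (τ p.2)) ∈ ltPairs ι := by
    intro τ p hp
    simp only [ltPairs, mem_filter, mem_univ, true_and, min_lt_max] at hp ⊢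
    exact τ.injective.ne hp.ne
  have inv : ∀ (τ : Perm ι) {p : ι × ι}, p.1 < p.2 →
      (min (τ⁻¹ (min (τ p.1) (τ p.2))) (τ⁻¹ (max (τ p.1) (τ p.2))),
        max (τ⁻¹ (min (τ p.1) (τ p.2))) (τ⁻¹ (max (τ p.1) (τ p.2)))) = p := by
    intro τ p hp
    rcases le_total (τ p.1) (τ p.2) with h | h <;> simp [h, hp.le]
  refine prod_nbij' _ (fun p => (min (τ⁻¹ p.1) (τ⁻¹ p.2), max (τ⁻¹ p.1) (τ⁻¹ p.2)))
    (mem τ) (mem τ⁻¹) (fun p hp => inv τ (mem_filter.mp hp).2)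
    (fun p hp => by simpa only [inv_inv] using inv τ⁻¹ (mem_filter.mp hp).2) fun _ _ => rfl

variable (S : ℝ → ℂ)

def inversionFactor (θ : ι → ℝ) (x y : ι) : ℂ :=
  if y < x then S (θ x - θ y) else 1

def scatteringCocycle (σ : Perm ι) (θ : ι → ℝ) : ℂ :=
  ∏ p ∈ ltPairs ι, inversionFactor S θ (σ p.1) (σ p.2)

omit [Fintype ι] in
lemma inversionFactor_swap_mul (hS : ∀ t, S t * S (-t) = 1) (θ : ι → ℝ) {x y : ι}
    (hxy : x ≠ y) :
    inversionFactor S θ y x * S (θ x - θ y) = inversionFactor S θ x y := by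
  rcases hxy.lt_or_gt with h | h
  · rw [inversionFactor, inversionFactor, if_pos h, if_neg h.not_gt, ← neg_sub (θ x), mul_comm,
      hS]
  · simp [inversionFactor, h, h.not_gt]

lemma scatteringCocycle_one (θ : ι → ℝ) : scatteringCocycle S 1 θ = 1 :=
  prod_eq_one fun _ hp => if_neg (mem_filter.mp hp).2.not_gt

lemma scatteringCocycle_mul (hS : ∀ t, S t * S (-t) = 1) (σ τ : Perm ι) (θ : ι → ℝ) :
    scatteringCocycle S (σ * τ) θ
      = scatteringCocycle S σ θ * scatteringCocycle S τ (fun i => θ (σ i)) := by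
  -- Reindexed through `τ`, the `σ`-product matches the `σ * τ`-product pair by pair, up to the
  -- factor `S (θ (σ x) - θ (σ y))` of each pair inverted by `τ`.
  simp only [scatteringCocycle, Perm.mul_apply]
  rw [← prod_ltPairs_perm (fun x y => inversionFactor S θ (σ x) (σ y)) τ, ← prod_mul_distrib]
  refine prod_congr rfl fun p hp => ?_
  have hne : τ p.1 ≠ τ p.2 := τ.injective.ne (mem_filter.mp hp).2.ne
  rcases hne.lt_or_gt with h | h
  · simp [inversionFactor, h.le, h.not_gt]
  · rw [min_eq_right h.le, max_eq_left h.le,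
      ← inversionFactor_swap_mul S hS θ (σ.injective.ne h.ne')]
    exact congrArg _ (if_pos h).symm

lemma scatteringCocycle_swap {a b : ι} (hab : a ⋖ b) (θ : ι → ℝ) :
    scatteringCocycle S (swap a b) θ = S (θ b - θ a) := by
  rw [scatteringCocycle, prod_eq_single (a, b)]
  · simp [inversionFactor, hab.lt]
  · -- no element lies strictly between `a` and `b`, so `(a, b)` is the only inversion
    rintro ⟨p, q⟩ hp hne
    have hpq : p < q := (mem_filter.mp hp).2
    have hlt := hab.lt
    have hnone := hab.2
    refine if_neg ?_
    simp only [swap_apply_def]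
    grind
  · simp [ltPairs, hab.lt]

lemma norm_scatteringCocycle (hS : ∀ t, ‖S t‖ = 1) (σ : Perm ι) (θ : ι → ℝ) :
    ‖scatteringCocycle S σ θ‖ = 1 := by
  rw [scatteringCocycle, norm_prod]
  refine prod_eq_one fun p _ => ?_
  unfold inversionFactor
  split_ifs <;> simp [hS]

lemma measurable_scatteringCocycle (hS : Measurable S) (σ : Perm ι) :
    Measurable (scatteringCocycle S σ) := by
  refine Finset.measurable_prod _ fun p _ => ?_
  unfold inversionFactor
  split_ifs
  · exact hS.comp ((measurable_pi_apply _).sub (measurable_pi_apply _))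
  · exact measurable_const

end Cocycle

namespace MeasureTheory

variable {α 𝕜 E : Type*} [MeasurableSpace α] {μ : Measure α} [NormedField 𝕜]
  [NormedAddCommGroup E] [NormedSpace 𝕜 E] {p : ℝ≥0∞} {c : α → 𝕜}

lemma eLpNorm_smul_of_norm_eq_one (hc : ∀ x, ‖c x‖ = 1) (f : α → E) :
    eLpNorm (c • f) p μ = eLpNorm f p μ :=
  eLpNorm_congr_norm_ae (ae_of_all _ fun x => by simp [norm_smul, hc])

lemma MemLp.smul_of_norm_eq_one (hcm : AEStronglyMeasurable c μ) (hc : ∀ x, ‖c x‖ = 1)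
    {f : α → E} (hf : MemLp f p μ) : MemLp (c • f) p μ :=
  ⟨hcm.smul hf.1, by rw [eLpNorm_smul_of_norm_eq_one hc]; exact hf.2⟩

variable [Fact (1 ≤ p)]

variable (c) in
def Lp.smulUnimodularₗᵢ (hcm : AEStronglyMeasurable c μ) (hc : ∀ x, ‖c x‖ = 1) :
    Lp E p μ →ₗᵢ[𝕜] Lp E p μ where
  toFun f := ((Lp.memLp f).smul_of_norm_eq_one hcm hc).toLp _
  map_add' f g := by
    simp only [← MemLp.toLp_add]
    refine MemLp.toLp_congr _ _ ?_
    filter_upwards [Lp.coeFn_add f g] with x hx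
    rw [Pi.smul_apply', hx, Pi.add_apply, Pi.add_apply, Pi.smul_apply', Pi.smul_apply', smul_add]
  map_smul' a f := by
    rw [RingHom.id_apply, ← MemLp.toLp_const_smul]
    refine MemLp.toLp_congr _ _ ?_
    filter_upwards [Lp.coeFn_smul a f] with x hx
    rw [Pi.smul_apply', hx, Pi.smul_apply, Pi.smul_apply, Pi.smul_apply', smul_comm]
  norm_map' f := by
    change ‖MemLp.toLp _ ((Lp.memLp f).smul_of_norm_eq_one hcm hc)‖ = ‖f‖
    rw [Lp.norm_toLp, eLpNorm_smul_of_norm_eq_one hc, Lp.norm_def]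

variable (c) in
lemma Lp.coeFn_smulUnimodularₗᵢ (hcm : AEStronglyMeasurable c μ) (hc : ∀ x, ‖c x‖ = 1)
    (f : Lp E p μ) : ⇑(Lp.smulUnimodularₗᵢ c hcm hc f) =ᵐ[μ] c • ⇑f :=
  MemLp.coeFn_toLp ((Lp.memLp f).smul_of_norm_eq_one hcm hc)

end MeasureTheory

lemma measurePreserving_comp_perm {ι X : Type*} [Fintype ι] [MeasureSpace X]
    [SigmaFinite (volume : Measure X)] (σ : Perm ι) :
    MeasurePreserving (fun (θ : ι → X) i => θ (σ i)) :=
  (volume_measurePreserving_piCongrLeft (fun _ => X) σ).symm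

def MonoidHom.toUnitary {G 𝕜 H : Type*} [Group G] [RCLike 𝕜] [NormedAddCommGroup H]
    [InnerProductSpace 𝕜 H] [CompleteSpace H] (ρ : G →* (H →L[𝕜] H))
    (hρ : ∀ g x, ‖ρ g x‖ = ‖x‖) : G →* unitary (H →L[𝕜] H) :=
  ρ.codRestrict _ fun g => ((Group.isUnit g).map ρ).mem_unitary_of_star_mul_self
    ((ρ g).norm_map_iff_adjoint_comp_self.mp (hρ g))

section TwistedPermutation

variable {ι : Type*} [Fintype ι] [LinearOrder ι] (S : ℝ → ℂ) (hSm : Measurable S)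
  (hS1 : ∀ t, ‖S t‖ = 1)

def twistedPerm (σ : Perm ι) :
    Lp ℂ 2 (volume : Measure (ι → ℝ)) →ₗᵢ[ℂ] Lp ℂ 2 (volume : Measure (ι → ℝ)) :=
  (Lp.smulUnimodularₗᵢ (scatteringCocycle S σ)
      (measurable_scatteringCocycle S hSm σ).aestronglyMeasurable
      (norm_scatteringCocycle S hS1 σ)).comp
    (Lp.compMeasurePreservingₗᵢ ℂ _ (measurePreserving_comp_perm σ))

lemma coeFn_twistedPerm (σ : Perm ι) (ψ : Lp ℂ 2 (volume : Measure (ι → ℝ))) :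
    twistedPerm S hSm hS1 σ ψ
      =ᵐ[volume] fun θ => scatteringCocycle S σ θ * ψ (fun i => θ (σ i)) := by
  filter_upwards [Lp.coeFn_smulUnimodularₗᵢ (scatteringCocycle S σ) _ _
      (Lp.compMeasurePreservingₗᵢ ℂ _ (measurePreserving_comp_perm σ) ψ),
    Lp.coeFn_compMeasurePreserving ψ (measurePreserving_comp_perm σ)] with θ h₁ h₂
  rw [twistedPerm, LinearIsometry.coe_comp, Function.comp_apply, h₁, Pi.smul_apply', smul_eq_mul]
  exact congrArg _ h₂

def twistedPermRep (hS : ∀ t, S t * S (-t) = 1) :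
    Perm ι →* (Lp ℂ 2 (volume : Measure (ι → ℝ)) →L[ℂ] Lp ℂ 2 (volume : Measure (ι → ℝ))) where
  toFun σ := (twistedPerm S hSm hS1 σ).toContinuousLinearMap
  map_one' := by
    ext ψ
    filter_upwards [coeFn_twistedPerm S hSm hS1 1 ψ] with θ h
    simpa [scatteringCocycle_one] using h
  map_mul' σ τ := by
    ext ψ
    filter_upwards [coeFn_twistedPerm S hSm hS1 (σ * τ) ψ,
      coeFn_twistedPerm S hSm hS1 σ (twistedPerm S hSm hS1 τ ψ),
      (measurePreserving_comp_perm σ).quasiMeasurePreserving.ae_eq_comp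
        (coeFn_twistedPerm S hSm hS1 τ ψ)] with θ hστ hσ hτ
    simp only [Function.comp_apply] at hτ
    simp only [LinearIsometry.coe_toContinuousLinearMap, mul_apply_eq_comp]
    rw [hστ, hσ, hτ, scatteringCocycle_mul S hS, mul_assoc]
    rfl

def zamolodchikovRep (hS : ∀ t, S t * S (-t) = 1) :
    Perm ι →* unitary
      (Lp ℂ 2 (volume : Measure (ι → ℝ)) →L[ℂ] Lp ℂ 2 (volume : Measure (ι → ℝ))) :=
  (twistedPermRep S hSm hS1 hS).toUnitary fun σ => (twistedPerm S hSm hS1 σ).norm_map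

end TwistedPermutation

lemma fin_mk_covBy_mk_add_one {n i : ℕ} (hi : i + 1 < n) :
    (⟨i, Nat.lt_of_succ_lt hi⟩ : Fin n) ⋖ ⟨i + 1, hi⟩ :=
  ⟨Nat.lt_add_one i, fun c h₁ h₂ => by simp only [Fin.lt_def] at h₁ h₂; omega⟩

lemma isZamoRep_zamolodchikovRep (S : ℝ → ℂ) (hSm : Measurable S) (hS1 : ∀ t, ‖S t‖ = 1)
    (hS : ∀ t, S t * S (-t) = 1) (n : ℕ) :
    IsZamoRep S n (zamolodchikovRep S hSm hS1 hS) := by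
  intro i hi ψ
  filter_upwards [coeFn_twistedPerm S hSm hS1 (tau n i hi) ψ] with θ h
  rw [← scatteringCocycle_swap S (fin_mk_covBy_mk_add_one hi)]
  exact h

lemma monoidHom_ext_tau {n : ℕ} {M : Type*} [Monoid M] {f g : Perm (Fin n) →* M}
    (h : ∀ i (hi : i + 1 < n), f (tau n i hi) = g (tau n i hi)) : f = g := by
  cases n with
  | zero => exact MonoidHom.ext fun σ => by rw [Subsingleton.elim σ 1, map_one, map_one]
  | succ m =>
    refine MonoidHom.eq_of_eqOn_denseM (Perm.mclosure_swap_castSucc_succ m) ?_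
    rintro _ ⟨i, rfl⟩
    exact h i (Nat.succ_lt_succ i.isLt)

lemma IsZamoRep.unique {S : ℝ → ℂ} {n : ℕ}
    {D D' : Perm (Fin n) →* unitary (Hsp n →L[ℂ] Hsp n)}
    (hD : IsZamoRep S n D) (hD' : IsZamoRep S n D') : D = D' := by
  refine monoidHom_ext_tau fun i hi => Subtype.ext <| ContinuousLinearMap.ext fun ψ => Lp.ext ?_
  filter_upwards [hD i hi ψ, hD' i hi ψ] with θ h h' using h.trans h'.symm

lemma tau_mul_self {n i : ℕ} (hi : i + 1 < n) : tau n i hi * tau n i hi = 1 :=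
  swap_mul_self _ _

lemma tau_mul_comm {n i j : ℕ} (hi : i + 1 < n) (hj : j + 1 < n) (h : i + 1 < j ∨ j + 1 < i) :
    tau n i hi * tau n j hj = tau n j hj * tau n i hi :=
  (Perm.disjoint_swap_swap (by simp [Fin.ext_iff]; omega)).commute

lemma swap_braid {α : Type*} [DecidableEq α] {a b c : α} (hab : a ≠ b) (hac : a ≠ c)
    (hbc : b ≠ c) : swap a b * swap b c * swap a b = swap b c * swap a b * swap b c :=
  calc swap a b * swap b c * swap a b = swap a c := by
        rw [swap_comm a b, swap_comm b c]; exact swap_mul_swap_mul_swap hbc.symm hac.symm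
    _ = swap b c * swap a b * swap b c := by
        rw [swap_comm a c]; exact (swap_mul_swap_mul_swap hab hac).symm

lemma tau_braid {n i : ℕ} (hi : i + 2 < n) :
    tau n i (Nat.lt_of_succ_lt hi) * tau n (i + 1) hi * tau n i (Nat.lt_of_succ_lt hi)
      = tau n (i + 1) hi * tau n i (Nat.lt_of_succ_lt hi) * tau n (i + 1) hi :=
  swap_braid (by simp) (by simp +arith) (by simp)

theorem statement0 (S₂ : ℝ → ℂ) (hS₂meas : Measurable S₂)
    (hS₂abs : ∀ θ : ℝ, ‖S₂ θ‖ = 1)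
    (hS₂sym : ∀ θ : ℝ, S₂ (-θ) = starRingEnd ℂ (S₂ θ))
    (n : ℕ) :
    (∃! D : Equiv.Perm (Fin n) →* unitary (Hsp n →L[ℂ] Hsp n), IsZamoRep S₂ n D) ∧
    (∀ D : Equiv.Perm (Fin n) →* unitary (Hsp n →L[ℂ] Hsp n), IsZamoRep S₂ n D →
      (∀ (i : ℕ) (hi : i + 1 < n), D (tau n i hi) * D (tau n i hi) = 1) ∧
      (∀ (i j : ℕ) (hi : i + 1 < n) (hj : j + 1 < n), (i + 1 < j ∨ j + 1 < i) →
        D (tau n i hi) * D (tau n j hj) = D (tau n j hj) * D (tau n i hi)) ∧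
      (∀ (i : ℕ) (hi : i + 2 < n),
        D (tau n i (Nat.lt_of_succ_lt hi)) * D (tau n (i+1) hi) *
            D (tau n i (Nat.lt_of_succ_lt hi))
          = D (tau n (i+1) hi) * D (tau n i (Nat.lt_of_succ_lt hi)) *
              D (tau n (i+1) hi))) := by
  have hS₂inv : ∀ t, S₂ t * S₂ (-t) = 1 := fun t => by
    rw [hS₂sym, mul_conj, normSq_eq_norm_sq, hS₂abs]
    norm_num
  have hZ := isZamoRep_zamolodchikovRep S₂ hS₂meas hS₂abs hS₂inv n
  refine ⟨⟨_, hZ, fun D hD => hD.unique hZ⟩, fun D _ => ⟨fun i hi => ?_, fun i j hi hj h => ?_,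
    fun i hi => ?_⟩⟩
  · rw [← map_mul, tau_mul_self, map_one]
  · rw [← map_mul, ← map_mul, tau_mul_comm hi hj h]
  · rw [← map_mul, ← map_mul, ← map_mul, ← map_mul, tau_braid hi]
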